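/- arXiv:2509.03847 — 3 statements merged into one kernel-verified Lean document; each statement's English description precedes it below -/
import Mathlib

section
/- A graph G is α-critical if and only if for every edge ab of G, the independence number of the localization G_{ab} equals α(G) − 1, where G_{ab} is the induced subgraph of G on the vertices not in N_G(a) ∪ N_G(b). -/
open Classical

noncomputable section

variable {V : Type*}

/-- `s` is an independent set of `G`. -/
def IndepSet (G : SimpleGraph V) (s : Set V) : Prop :=
  ∀ ⦃a⦄, a ∈ s → ∀ ⦃b⦄, b ∈ s → ¬ G.Adj a b

/-- The independence number `α(G)`. -/
def alphaNum [Fintype V] (G : SimpleGraph V) : ℕ :=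
  sSup {n | ∃ s : Set V, IndepSet G s ∧ s.ncard = n}

/-- `s` is a maximal independent set of `G`. -/
def MaximalIndep (G : SimpleGraph V) (s : Set V) : Prop :=
  IndepSet G s ∧ ∀ t : Set V, IndepSet G t → s ⊆ t → s = t

/-- `G` is well-covered: all maximal independent sets have cardinality `α(G)`. -/
def WellCovered [Fintype V] (G : SimpleGraph V) : Prop :=
  ∀ s : Set V, MaximalIndep G s → s.ncard = alphaNum G

/-- The open neighborhood `N_G(S)` of a set of vertices. -/
def openNbhd (G : SimpleGraph V) (S : Set V) : Set V :=
  {v | v ∉ S ∧ ∃ u ∈ S, G.Adj u v}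

/-- The closed neighborhood `N_G[S]`. -/
def closedNbhd (G : SimpleGraph V) (S : Set V) : Set V :=
  S ∪ openNbhd G S

/-- The vertex set of the localization `G_S = G - N_G[S]`. -/
def localSet (G : SimpleGraph V) (S : Set V) : Set V :=
  (closedNbhd G S)ᶜ

/-- `G` belongs to the class `W_p`. -/
def Wp (p : ℕ) [Fintype V] (G : SimpleGraph V) : Prop :=
  p ≤ Fintype.card V ∧
    ∀ A : Fin p → Set V,
      (∀ i, IndepSet G (A i)) →
      (∀ i j, i ≠ j → Disjoint (A i) (A j)) →
      ∃ S : Fin p → Set V,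
        (∀ i j, i ≠ j → Disjoint (S i) (S j)) ∧
        (∀ i, IndepSet G (S i) ∧ (S i).ncard = alphaNum G) ∧
        (∀ i, A i ⊆ S i)

/-- `G` is `α`-critical: deleting any edge increases the independence number. -/
def AlphaCritical [Fintype V] (G : SimpleGraph V) : Prop :=
  ∀ a b : V, G.Adj a b → alphaNum G < alphaNum (G.deleteEdges {s(a, b)})

/-- The vertex set of `G_{ab} = G - (N_G(a) ∪ N_G(b))`. -/
def edgeLocalSet (G : SimpleGraph V) (a b : V) : Set V :=
  (G.neighborSet a ∪ G.neighborSet b)ᶜ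

/-!
An independent set of `G - ab` is either independent in `G` or contains both `a` and `b`, and then
its other vertices form an independent set of `G_{ab}`; conversely, `a` and `b` extend any
independent set of `G_{ab}` in `G - ab`. Hence `α(G - ab) = max (α(G), α(G_{ab}) + 2)`. Adding `a`
alone gives `α(G_{ab}) + 1 ≤ α(G)`, so `α(G - ab) > α(G)` exactly when `α(G_{ab}) = α(G) - 1`.
-/

namespace IndepSet

variable {G H : SimpleGraph V} {s t : Set V}

theorem mono (ht : IndepSet G t) (hst : s ⊆ t) : IndepSet G s :=
  fun _ hx _ hy => ht (hst hx) (hst hy)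

theorem anti (hs : IndepSet G s) (hle : H ≤ G) : IndepSet H s :=
  fun _ hx _ hy hadj => hs hx hy (hle hadj)

theorem insert {a : V} (hs : IndepSet G s) (ha : ∀ x ∈ s, ¬ G.Adj a x) :
    IndepSet G (insert a s) := by
  rintro x (rfl | hx) y (rfl | hy) hadj
  · exact G.irrefl hadj
  · exact ha y hy hadj
  · exact ha x hx hadj.symm
  · exact hs hx hy hadj

end IndepSet

section alphaNum

variable [Fintype V] {G H : SimpleGraph V} {s : Set V}

theorem bddAbove_indepSet_ncard (G : SimpleGraph V) :
    BddAbove {n | ∃ s : Set V, IndepSet G s ∧ s.ncard = n} := by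
  refine ⟨Fintype.card V, ?_⟩
  rintro n ⟨t, -, rfl⟩
  simpa [Set.ncard_univ] using Set.ncard_le_ncard (Set.subset_univ t)

theorem IndepSet.ncard_le_alphaNum (hs : IndepSet G s) : s.ncard ≤ alphaNum G :=
  le_csSup (bddAbove_indepSet_ncard G) ⟨s, hs, rfl⟩

theorem exists_indepSet_ncard_eq_alphaNum (G : SimpleGraph V) :
    ∃ s : Set V, IndepSet G s ∧ s.ncard = alphaNum G := by
  have hne : {n | ∃ s : Set V, IndepSet G s ∧ s.ncard = n}.Nonempty :=
    ⟨0, ∅, fun _ h => absurd h (Set.notMem_empty _), Set.ncard_empty V⟩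
  exact Nat.sSup_mem hne (bddAbove_indepSet_ncard G)

theorem alphaNum_le_iff {n : ℕ} : alphaNum G ≤ n ↔ ∀ s, IndepSet G s → s.ncard ≤ n := by
  refine ⟨fun h s hs => hs.ncard_le_alphaNum.trans h, fun h => ?_⟩
  obtain ⟨s, hs, hcard⟩ := exists_indepSet_ncard_eq_alphaNum G
  exact hcard ▸ h s hs

theorem alphaNum_anti (hle : H ≤ G) : alphaNum G ≤ alphaNum H := by
  obtain ⟨s, hs, hcard⟩ := exists_indepSet_ncard_eq_alphaNum G
  exact hcard ▸ (hs.anti hle).ncard_le_alphaNum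

theorem IndepSet.ncard_le_alphaNum_induce {S : Set V} (hs : IndepSet G s) (hsS : s ⊆ S) :
    s.ncard ≤ alphaNum (G.induce S) := by
  have hind : IndepSet (G.induce S) (Subtype.val ⁻¹' s) := fun _ hx _ hy => hs hx hy
  calc s.ncard = (Subtype.val ⁻¹' s : Set S).ncard := by
        rw [← Set.ncard_image_of_injective _ Subtype.val_injective,
          Set.image_preimage_eq_of_subset (by rwa [Subtype.range_val])]
    _ ≤ alphaNum (G.induce S) := hind.ncard_le_alphaNum

theorem exists_indepSet_subset_ncard_eq_alphaNum_induce (G : SimpleGraph V) (S : Set V) :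
    ∃ s ⊆ S, IndepSet G s ∧ s.ncard = alphaNum (G.induce S) := by
  obtain ⟨t, ht, hcard⟩ := exists_indepSet_ncard_eq_alphaNum (G.induce S)
  refine ⟨Subtype.val '' t, Subtype.coe_image_subset S t, ?_, ?_⟩
  · rintro _ ⟨x, hx, rfl⟩ _ ⟨y, hy, rfl⟩
    exact ht hx hy
  · rw [Set.ncard_image_of_injective _ Subtype.val_injective, hcard]

end alphaNum

section edgeLocalSet

variable {G : SimpleGraph V} {a b : V}

theorem mem_edgeLocalSet {x : V} : x ∈ edgeLocalSet G a b ↔ ¬ G.Adj a x ∧ ¬ G.Adj b x := by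
  simp [edgeLocalSet, SimpleGraph.neighborSet]

theorem IndepSet.subset_edgeLocalSet_of_deleteEdges {s : Set V}
    (hs : IndepSet (G.deleteEdges {s(a, b)}) s) (ha : a ∈ s) (hb : b ∈ s) :
    s \ {a, b} ⊆ edgeLocalSet G a b := by
  rintro x ⟨hxs, hxab⟩
  simp only [Set.mem_insert_iff, Set.mem_singleton_iff, not_or] at hxab
  refine mem_edgeLocalSet.2 ⟨fun h => hs ha hxs ?_, fun h => hs hb hxs ?_⟩ <;>
    simp_all [SimpleGraph.deleteEdges_adj, eq_comm]

theorem IndepSet.of_deleteEdges {s : Set V} (hs : IndepSet (G.deleteEdges {s(a, b)}) s)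
    (hab : ¬ (a ∈ s ∧ b ∈ s)) : IndepSet G s := by
  intro x hx y hy hadj
  refine hs hx hy (SimpleGraph.deleteEdges_adj.2 ⟨hadj, ?_⟩)
  simp only [Set.mem_singleton_iff, Sym2.eq_iff]
  rintro (⟨rfl, rfl⟩ | ⟨rfl, rfl⟩) <;> tauto

variable [Fintype V]

theorem alphaNum_induce_edgeLocalSet_add_one_le (hab : G.Adj a b) :
    alphaNum (G.induce (edgeLocalSet G a b)) + 1 ≤ alphaNum G := by
  obtain ⟨s, hsS, hs, hcard⟩ :=
    exists_indepSet_subset_ncard_eq_alphaNum_induce G (edgeLocalSet G a b)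
  have ha : a ∉ s := fun h => (mem_edgeLocalSet.1 (hsS h)).2 hab.symm
  rw [← hcard, ← Set.ncard_insert_of_notMem ha]
  exact (hs.insert fun x hx => (mem_edgeLocalSet.1 (hsS hx)).1).ncard_le_alphaNum

theorem alphaNum_induce_edgeLocalSet_add_two_le_deleteEdges (hab : G.Adj a b) :
    alphaNum (G.induce (edgeLocalSet G a b)) + 2 ≤ alphaNum (G.deleteEdges {s(a, b)}) := by
  obtain ⟨s, hsS, hs, hcard⟩ :=
    exists_indepSet_subset_ncard_eq_alphaNum_induce G (edgeLocalSet G a b)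
  have ha : a ∉ insert b s := by
    rintro (h | h)
    exacts [G.ne_of_adj hab h, (mem_edgeLocalSet.1 (hsS h)).2 hab.symm]
  have hb : b ∉ s := fun h => (mem_edgeLocalSet.1 (hsS h)).1 hab
  have hle := SimpleGraph.deleteEdges_le (G := G) {s(a, b)}
  have hind : IndepSet (G.deleteEdges {s(a, b)}) (insert a (insert b s)) := by
    refine ((hs.anti hle).insert fun x hx h => ?_).insert fun x hx h => ?_
    · exact (mem_edgeLocalSet.1 (hsS hx)).2 (hle h)
    · rcases hx with rfl | hx
      · simp [SimpleGraph.deleteEdges_adj] at h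
      · exact (mem_edgeLocalSet.1 (hsS hx)).1 (hle h)
  calc alphaNum (G.induce (edgeLocalSet G a b)) + 2 = (insert a (insert b s)).ncard := by
        rw [Set.ncard_insert_of_notMem ha, Set.ncard_insert_of_notMem hb, hcard]
    _ ≤ alphaNum (G.deleteEdges {s(a, b)}) := hind.ncard_le_alphaNum

theorem alphaNum_deleteEdges_le_max :
    alphaNum (G.deleteEdges {s(a, b)}) ≤
      max (alphaNum G) (alphaNum (G.induce (edgeLocalSet G a b)) + 2) := by
  refine alphaNum_le_iff.2 fun s hs => ?_
  by_cases hab : a ∈ s ∧ b ∈ s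
  · refine le_max_of_le_right ?_
    calc s.ncard ≤ (s \ {a, b}).ncard + ({a, b} : Set V).ncard :=
          Set.ncard_le_ncard_sdiff_add_ncard _ _
      _ ≤ alphaNum (G.induce (edgeLocalSet G a b)) + 2 := by
        gcongr
        · exact (hs.mono Set.sdiff_subset).of_deleteEdges (by simp) |>.ncard_le_alphaNum_induce
            (hs.subset_edgeLocalSet_of_deleteEdges hab.1 hab.2)
        · exact (Set.ncard_insert_le a {b}).trans_eq (by rw [Set.ncard_singleton])
  · exact le_max_of_le_left (hs.of_deleteEdges hab).ncard_le_alphaNum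

theorem alphaNum_deleteEdges_eq_max (hab : G.Adj a b) :
    alphaNum (G.deleteEdges {s(a, b)}) =
      max (alphaNum G) (alphaNum (G.induce (edgeLocalSet G a b)) + 2) :=
  alphaNum_deleteEdges_le_max.antisymm <| max_le
    (alphaNum_anti (SimpleGraph.deleteEdges_le _))
    (alphaNum_induce_edgeLocalSet_add_two_le_deleteEdges hab)

theorem alphaNum_lt_alphaNum_deleteEdges_iff (hab : G.Adj a b) :
    alphaNum G < alphaNum (G.deleteEdges {s(a, b)}) ↔
      alphaNum (G.induce (edgeLocalSet G a b)) = alphaNum G - 1 := by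
  have := alphaNum_induce_edgeLocalSet_add_one_le hab
  rw [alphaNum_deleteEdges_eq_max hab, lt_max_iff]
  omega

end edgeLocalSet

theorem stmt1 [Fintype V] (G : SimpleGraph V) :
    AlphaCritical G ↔
      ∀ a b : V, G.Adj a b →
        alphaNum (G.induce (edgeLocalSet G a b)) = alphaNum G - 1 :=
  forall₃_congr fun _ _ => alphaNum_lt_alphaNum_deleteEdges_iff
end
end

section
/- Let G be a graph without isolated vertices belonging to the class W_p, and let A be a non-maximum independent set of G. Then there exist p pairwise disjoint independent sets B_1, …, B_p, each disjoint from A, such that A ∪ B_i is a maximum independent set of G for each 1 ≤ i ≤ p. -/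
open Classical

noncomputable section

variable {V : Type*}

/-!
The sets `B_i` are built one at a time. Given pairwise disjoint `B_1, …, B_k` (`k < p`) with every
`A ∪ B_i` maximum, apply the `W_p` property to the family `A, B_1, …, B_k, ∅, …, ∅`: the set `S`
extending `A` is a maximum independent set disjoint from every `B_i`, and `B_{k+1} := S \ A`.
-/

open Function

variable {G : SimpleGraph V}

theorem IndepSet.mono_s14 {s t : Set V} (ht : IndepSet G t) (hst : s ⊆ t) : IndepSet G s :=
  fun _ ha _ hb => ht (hst ha) (hst hb)

theorem indepSet_empty : IndepSet G ∅ :=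
  fun _ ha => ha.elim

theorem pairwise_disjoint_cons {k : ℕ} (X : Set V) (C : Fin k → Set V) :
    Pairwise (Disjoint on (Fin.cons X C : Fin (k + 1) → Set V)) ↔
      (∀ i, Disjoint X (C i)) ∧ Pairwise (Disjoint on C) := by
  simp [pairwise_fin_succ_iff, onFun, disjoint_comm]

def IsMaximumIndepSet [Fintype V] (G : SimpleGraph V) (s : Set V) : Prop :=
  IndepSet G s ∧ s.ncard = alphaNum G

section Wp

variable [Fintype V] {p : ℕ}

theorem Wp.exists_extension {ι : Type*} (hG : Wp p G) {e : ι → Fin p} (he : e.Injective)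
    {A : ι → Set V} (hA : ∀ i, IndepSet G (A i)) (hdisj : Pairwise (Disjoint on A)) :
    ∃ S : ι → Set V, Pairwise (Disjoint on S) ∧ (∀ i, IsMaximumIndepSet G (S i)) ∧
      ∀ i, A i ⊆ S i := by
  have hA' : ∀ j, IndepSet G (extend e A ⊥ j) := by
    intro j
    rcases Classical.em (∃ i, e i = j) with ⟨i, rfl⟩ | hj
    · rw [he.extend_apply]; exact hA i
    · rw [extend_apply' _ _ _ hj]; exact indepSet_empty
  obtain ⟨S, hSdisj, hSmax, hAS⟩ :=
    hG.2 _ hA' fun _ _ hne => hdisj.disjoint_extend_bot (he.factorsThrough A) hne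
  refine ⟨S ∘ e, Pairwise.comp_of_injective (r := Disjoint on S) hSdisj he, fun i => hSmax (e i),
    fun i => ?_⟩
  have := hAS (e i)
  rwa [he.extend_apply] at this

theorem Wp.exists_isMaximumIndepSet_superset {k : ℕ} (hG : Wp p G) (hk : k < p)
    {C : Fin k → Set V} (hC : ∀ i, IndepSet G (C i)) (hCdisj : Pairwise (Disjoint on C))
    {A : Set V} (hA : IndepSet G A) (hAC : ∀ i, Disjoint A (C i)) :
    ∃ S, IsMaximumIndepSet G S ∧ A ⊆ S ∧ ∀ i, Disjoint S (C i) := by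
  obtain ⟨S, hSdisj, hSmax, hAS⟩ := hG.exists_extension (Fin.castLE_injective hk)
    (A := Fin.cons A C) (Fin.cases hA hC) ((pairwise_disjoint_cons A C).2 ⟨hAC, hCdisj⟩)
  refine ⟨S 0, hSmax 0, hAS 0, fun i => ?_⟩
  exact (hSdisj (Fin.succ_ne_zero i).symm).mono_right (hAS i.succ)

theorem Wp.exists_disjoint_completions (hG : Wp p G) {A : Set V} (hA : IndepSet G A) :
    ∀ k ≤ p, ∃ B : Fin k → Set V, Pairwise (Disjoint on B) ∧ (∀ i, Disjoint A (B i)) ∧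
      ∀ i, IsMaximumIndepSet G (A ∪ B i)
  | 0, _ => ⟨Fin.elim0, fun i => i.elim0, fun i => i.elim0, fun i => i.elim0⟩
  | k + 1, hk => by
    obtain ⟨B, hBdisj, hAB, hABmax⟩ := hG.exists_disjoint_completions hA k (k.le_succ.trans hk)
    obtain ⟨S, hSmax, hAS, hSB⟩ := hG.exists_isMaximumIndepSet_superset hk
      (fun i => (hABmax i).1.mono_s14 Set.subset_union_right) hBdisj hA hAB
    refine ⟨Fin.cons (S \ A) B, (pairwise_disjoint_cons _ B).2
      ⟨fun i => (hSB i).mono_left Set.sdiff_subset, hBdisj⟩, Fin.cases Set.disjoint_sdiff_right hAB,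
      Fin.cases ?_ hABmax⟩
    simpa only [Fin.cons_zero, Set.union_sdiff_cancel hAS] using hSmax

end Wp

theorem stmt14_general [Fintype V] (G : SimpleGraph V) (p : ℕ) (hG : Wp p G)
    (A : Set V) (hA : IndepSet G A) :
    ∃ B : Fin p → Set V,
      (∀ i, IndepSet G (B i)) ∧
      (∀ i j, i ≠ j → Disjoint (B i) (B j)) ∧
      (∀ i, Disjoint A (B i)) ∧
      (∀ i, IndepSet G (A ∪ B i) ∧ (A ∪ B i).ncard = alphaNum G) := by
  obtain ⟨B, hBdisj, hAB, hABmax⟩ := hG.exists_disjoint_completions hA p le_rfl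
  exact ⟨B, fun i => (hABmax i).1.mono_s14 Set.subset_union_right, fun _ _ => @hBdisj _ _, hAB, hABmax⟩

theorem stmt14 [Fintype V] (G : SimpleGraph V) (p : ℕ) (hp : 1 ≤ p)
    (hiso : ∀ v : V, ∃ u, G.Adj v u) (hG : Wp p G)
    (A : Set V) (hA : IndepSet G A) (hAcard : A.ncard < alphaNum G) :
    ∃ B : Fin p → Set V,
      (∀ i, IndepSet G (B i)) ∧
      (∀ i j, i ≠ j → Disjoint (B i) (B j)) ∧
      (∀ i, Disjoint A (B i)) ∧
      (∀ i, IndepSet G (A ∪ B i) ∧ (A ∪ B i).ncard = alphaNum G) :=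
  stmt14_general G p hG A hA
end
end

section
/- Let p ≥ 2 and let G be a graph in W_p without isolated vertices, and let A be a non-maximum independent set of G. Then there exist p − 1 pairwise disjoint maximum independent sets S_1, …, S_{p−1} of G, each disjoint from A. -/
open Classical

noncomputable section

variable {V : Type*}

namespace Wp

variable [Fintype V] {G : SimpleGraph V} {p : ℕ}

theorem exists_superset_of_indepSet (hG : Wp p G) (j : Fin p) {A : Set V}
    (hA : IndepSet G A) :
    ∃ S : Fin p → Set V,
      (∀ i k, i ≠ k → Disjoint (S i) (S k)) ∧
      (∀ i, IndepSet G (S i) ∧ (S i).ncard = alphaNum G) ∧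
      A ⊆ S j := by
  have hindep : ∀ i, IndepSet G (if i = j then A else ∅) := by
    intro i
    split_ifs
    · exact hA
    · exact fun _ h => h.elim
  have hdisj : ∀ i k, i ≠ k →
      Disjoint (if i = j then A else ∅) (if k = j then A else ∅) := by
    intro i k hik
    split_ifs with hi hk
    · exact absurd (hi.trans hk.symm) hik
    all_goals simp
  obtain ⟨S, hSdisj, hSmax, hsub⟩ := hG.2 _ hindep hdisj
  exact ⟨S, hSdisj, hSmax, by simpa using hsub j⟩

theorem exists_disjoint_of_indepSet (hG : Wp (p + 1) G) {A : Set V}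
    (hA : IndepSet G A) :
    ∃ S : Fin p → Set V,
      (∀ i k, i ≠ k → Disjoint (S i) (S k)) ∧
      (∀ i, IndepSet G (S i) ∧ (S i).ncard = alphaNum G) ∧
      (∀ i, Disjoint A (S i)) := by
  obtain ⟨S, hdisj, hmax, hA0⟩ := hG.exists_superset_of_indepSet 0 hA
  exact ⟨fun i => S i.succ, fun i k hik => hdisj _ _ (Fin.succ_injective _ |>.ne hik),
    fun i => hmax _, fun i => (hdisj 0 i.succ (Fin.succ_ne_zero i).symm).mono_left hA0⟩

end Wp

theorem stmt15_general [Fintype V] (G : SimpleGraph V) (p : ℕ)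
    (hG : Wp p G)
    (A : Set V) (hA : IndepSet G A) :
    ∃ S : Fin (p - 1) → Set V,
      (∀ i j, i ≠ j → Disjoint (S i) (S j)) ∧
      (∀ i, IndepSet G (S i) ∧ (S i).ncard = alphaNum G) ∧
      (∀ i, Disjoint A (S i)) := by
  cases p with
  | zero => exact ⟨Fin.elim0, fun i => i.elim0, fun i => i.elim0, fun i => i.elim0⟩
  | succ q => exact hG.exists_disjoint_of_indepSet hA

theorem stmt15 [Fintype V] (G : SimpleGraph V) (p : ℕ) (hp : 2 ≤ p)
    (hiso : ∀ v : V, ∃ u, G.Adj v u) (hG : Wp p G)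
    (A : Set V) (hA : IndepSet G A) (hAcard : A.ncard < alphaNum G) :
    ∃ S : Fin (p - 1) → Set V,
      (∀ i j, i ≠ j → Disjoint (S i) (S j)) ∧
      (∀ i, IndepSet G (S i) ∧ (S i).ncard = alphaNum G) ∧
      (∀ i, Disjoint A (S i)) :=
  stmt15_general G p hG A hA
end
end
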